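/- arXiv:1309.4029 — 4 statements merged into one kernel-verified Lean document; each statement's English description precedes it below -/
import Mathlib

section
/- Let X_1,...,X_n be sampled without replacement from a finite population of N > 1 reals with mean μ, minimum a and maximum b, and Z_n = (1/n)∑_{t=1}^n (X_t − μ). Then for any λ > 0 and 1 ≤ n ≤ N−1, log E[exp(λ n Z_n)] ≤ ((b−a)²/8) λ² (n+1)(1 − n/N). -/
/-!
Average over the `N!` orderings of the population. Conditioning on the first draw `j` of a
population of size `m + 1` writes the centred sum of the first `n + 1` draws as
`(1 - n/m) (y_j - mean)` plus the centred sum of the first `n` draws from the remaining `m`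
values. Hoeffding's lemma for the uniform choice of `j` and induction on `n` then give Serfling's
bound `log E exp(λ n Z_n) ≤ ((b-a)²/8) λ² n (N - n + 1) / N`.

Since all `N` centred draws sum to zero, `n Z_n` is minus the centred sum of the last `N - n`
draws, which are the first `N - n` draws of the reversed ordering. Serfling's bound for these
`N - n` draws is the claim, as `(N - n)(n + 1) / N = (n + 1)(1 - n/N)`.
-/

open MeasureTheory Finset Real
open scoped ENNReal

/-- The first `N` coordinates of the process `X` are a sample drawn without replacement
from the population `x : Fin N → ℝ`, i.e. the law of `(X 0, …, X (N-1))` is the uniform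
distribution over the orderings of the population. -/
def samplesWithoutReplacement {Ω : Type*} [MeasurableSpace Ω] (P : Measure Ω)
    (N : ℕ) (x : Fin N → ℝ) (X : ℕ → Ω → ℝ) : Prop :=
  Measure.map (fun ω (i : Fin N) => X i ω) P =
    (Nat.factorial N : ℝ≥0∞)⁻¹ • ∑ e : Equiv.Perm (Fin N), Measure.dirac (fun i => x (e i))

open Equiv

open ProbabilityTheory in
theorem sum_exp_mul_sub_mean_le {ι : Type*} [Fintype ι] (w : ι → ℝ) {a b : ℝ}
    (hw : ∀ i, w i ∈ Set.Icc a b) (s : ℝ) :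
    ∑ i, exp (s * (w i - (∑ j, w j) / Fintype.card ι)) ≤
      Fintype.card ι * exp ((b - a) ^ 2 / 8 * s ^ 2) := by
  cases isEmpty_or_nonempty ι
  · simp
  let _ : MeasurableSpace ι := ⊤
  let μ : Measure ι := (PMF.uniformOfFintype ι).toMeasure
  have integral_μ (f : ι → ℝ) : μ[f] = (∑ i, f i) / Fintype.card ι := by
    simp [μ, PMF.integral_eq_sum, PMF.uniformOfFintype_apply, ← Finset.mul_sum, div_eq_inv_mul]
  have hoeffding := (hasSubgaussianMGF_of_mem_Icc (μ := μ) (X := w)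
    Measurable.of_discrete.aemeasurable (ae_of_all _ hw)).mgf_le s
  rw [mgf, integral_μ, integral_μ, div_le_iff₀' (by positivity)] at hoeffding
  refine hoeffding.trans_eq ?_
  congr 2
  simp only [NNReal.coe_pow, NNReal.coe_div, coe_nnnorm, Real.norm_eq_abs, NNReal.coe_ofNat,
    div_pow, sq_abs]
  ring

/-- `n Z_n` in the paper's notation, for the sample listing the population `y` in the order `e`. -/
noncomputable def prefixDeviation {M : ℕ} (y : Fin M → ℝ) (n : ℕ) (e : Perm (Fin M)) : ℝ :=
  ∑ t : Fin M with t.val < n, (y (e t) - (∑ i, y i) / M)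

@[simp]
theorem prefixDeviation_zero {M : ℕ} (y : Fin M → ℝ) (e : Perm (Fin M)) :
    prefixDeviation y 0 e = 0 := by
  simp [prefixDeviation]

theorem prefixDeviation_eq_neg {M : ℕ} (y : Fin M → ℝ) {n : ℕ} (hn : n ≤ M)
    (e : Perm (Fin M)) :
    prefixDeviation y n e = -prefixDeviation y (M - n) (e * Fin.revPerm) := by
  have htotal : ∑ t, (y (e t) - (∑ i, y i) / M) = 0 := by
    rcases Nat.eq_zero_or_pos M with rfl | hM
    · simp
    rw [Finset.sum_sub_distrib, Equiv.sum_comp e y]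
    simp [mul_div_cancel₀ _ (by positivity : (M : ℝ) ≠ 0)]
  have hrest : ∑ t : Fin M with ¬ t.val < n, (y (e t) - (∑ i, y i) / M) =
      prefixDeviation y (M - n) (e * Fin.revPerm) := by
    refine Finset.sum_equiv Fin.revPerm (fun t => ?_) (fun t _ => ?_)
    · simp only [not_lt, mem_filter, mem_univ, true_and, Fin.revPerm_apply, Fin.val_rev]
      omega
    · simp
  rw [← hrest, eq_neg_iff_add_eq_zero, prefixDeviation, Finset.sum_filter_add_sum_filter_not,
    htotal]

theorem prefixDeviation_decomposeFin_symm {m : ℕ} (y : Fin (m + 1) → ℝ) {n : ℕ} (hn : n ≤ m)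
    (hm : m ≠ 0) (j : Fin (m + 1)) (σ : Perm (Fin m)) :
    prefixDeviation y (n + 1) (Perm.decomposeFin.symm (j, σ)) =
      (m - n) / m * (y j - (∑ i, y i) / (m + 1)) +
        prefixDeviation (fun i => y (swap 0 j i.succ)) n σ := by
  have hsum : ∑ i : Fin m, y (swap 0 j i.succ) = ∑ i, y i - y j := by
    rw [← Equiv.sum_comp (swap 0 j) y, Fin.sum_univ_succ, swap_apply_left]
    ring
  have hcard : #{t : Fin m | t.val < n} = n := by
    rw [Fin.card_filter_val_lt, min_eq_right hn]
  simp only [prefixDeviation]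
  set S := ∑ i, y i
  rw [Finset.sum_filter, Fin.sum_univ_succ]
  simp only [Fin.val_zero, Fin.val_succ, Nat.zero_lt_succ, if_true, Nat.add_lt_add_iff_right,
    ← Finset.sum_filter, Perm.decomposeFin_symm_apply_zero, Perm.decomposeFin_symm_apply_succ,
    hsum, sum_sub_distrib, sum_const, hcard, nsmul_eq_mul]
  push_cast
  field_simp
  ring

theorem serfling_exponent_step {n m : ℝ} (hn : 0 ≤ n) (hnm : n ≤ m) (hm : 0 < m) :
    n * (m - n + 1) / m + ((m - n) / m) ^ 2 ≤ (n + 1) * (m + 1 - (n + 1) + 1) / (m + 1) := by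
  have hgap : (n + 1) * (m + 1 - (n + 1) + 1) / (m + 1) -
      (n * (m - n + 1) / m + ((m - n) / m) ^ 2) = (m - n) * n / (m ^ 2 * (m + 1)) := by
    field_simp
    ring
  have : 0 ≤ (m - n) * n / (m ^ 2 * (m + 1)) :=
    div_nonneg (mul_nonneg (by linarith) hn) (by positivity)
  linarith

theorem sum_exp_mul_prefixDeviation_le {M n : ℕ} (hn : n < M) (y : Fin M → ℝ) {a b : ℝ}
    (hy : ∀ i, y i ∈ Set.Icc a b) (l : ℝ) :
    ∑ e : Perm (Fin M), exp (l * prefixDeviation y n e) ≤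
      M.factorial * exp ((b - a) ^ 2 / 8 * l ^ 2 * (n * (M - n + 1) / M)) := by
  induction n generalizing M with
  | zero => simp [Fintype.card_perm]
  | succ n ih =>
    obtain ⟨m, rfl⟩ : ∃ m, M = m + 1 := ⟨M - 1, by omega⟩
    have hnm : n < m := by omega
    set c := (b - a) ^ 2 / 8
    set ν := (∑ i, y i) / (m + 1)
    set s := l * ((m - n) / m)
    let y' : Fin (m + 1) → Fin m → ℝ := fun j i => y (swap 0 j i.succ)
    have hsplit : ∀ j σ, exp (l * prefixDeviation y (n + 1) (Perm.decomposeFin.symm (j, σ))) =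
        exp (s * (y j - ν)) * exp (l * prefixDeviation (y' j) n σ) := by
      intro j σ
      rw [prefixDeviation_decomposeFin_symm y hnm.le (by omega), ← exp_add]
      congr 1
      simp only [s, ν, y']
      ring
    have hhoeffding : ∑ j, exp (s * (y j - ν)) ≤ (m + 1) * exp (c * s ^ 2) := by
      simpa using sum_exp_mul_sub_mean_le y hy s
    calc ∑ e : Perm (Fin (m + 1)), exp (l * prefixDeviation y (n + 1) e)
        = ∑ j, exp (s * (y j - ν)) * ∑ σ, exp (l * prefixDeviation (y' j) n σ) := by
          rw [← Perm.decomposeFin.symm.sum_comp, Fintype.sum_prod_type]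
          simp only [hsplit, Finset.mul_sum]
      _ ≤ ∑ j, exp (s * (y j - ν)) * (m.factorial * exp (c * l ^ 2 * (n * (m - n + 1) / m))) := by
          gcongr with j
          exact ih hnm (y' j) (fun i => hy _)
      _ ≤ (m + 1) * exp (c * s ^ 2) * (m.factorial * exp (c * l ^ 2 * (n * (m - n + 1) / m))) := by
          rw [← Finset.sum_mul]
          gcongr
      _ = (m + 1).factorial * exp (c * l ^ 2 * (n * (m - n + 1) / m) + c * s ^ 2) := by
          rw [exp_add, Nat.factorial_succ]
          push_cast
          ring
      _ ≤ _ := by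
          have hstep := serfling_exponent_step (n := n) (m := m) (by positivity)
            (by exact_mod_cast hnm.le) (by exact_mod_cast (show 0 < m by omega))
          push_cast
          gcongr
          calc c * l ^ 2 * (n * (m - n + 1) / m) + c * s ^ 2
              = c * l ^ 2 * (n * (m - n + 1) / m + ((m - n) / m) ^ 2) := by ring
            _ ≤ _ := by gcongr

theorem sum_exp_mul_prefixDeviation_eq_complement {M n : ℕ} (hn : n ≤ M) (y : Fin M → ℝ)
    (l : ℝ) :
    ∑ e : Perm (Fin M), exp (l * prefixDeviation y n e) =
      ∑ e : Perm (Fin M), exp (-l * prefixDeviation y (M - n) e) := by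
  rw [← Equiv.sum_comp (Equiv.mulRight Fin.revPerm)
    (fun e => exp (-l * prefixDeviation y (M - n) e))]
  simp [prefixDeviation_eq_neg y hn]

theorem Fin.sum_filter_val_lt_eq_sum_range {β : Type*} [AddCommMonoid β] {N n : ℕ} (hn : n ≤ N)
    (f : ℕ → β) :
    ∑ t : Fin N with t.val < n, f t = ∑ t ∈ range n, f t := by
  rw [Finset.sum_filter, Fin.sum_univ_eq_sum_range (fun t => if t < n then f t else 0),
    ← Finset.sum_filter]
  congr 1
  ext t
  simp only [mem_filter, mem_range]
  omega

theorem integral_comp_of_samplesWithoutReplacement {Ω : Type*} [MeasurableSpace Ω]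
    {P : Measure Ω} {N : ℕ} {x : Fin N → ℝ} {X : ℕ → Ω → ℝ}
    (hX : samplesWithoutReplacement P N x X) (hXm : ∀ i, Measurable (X i))
    {F : (Fin N → ℝ) → ℝ} (hF : Measurable F) :
    ∫ ω, F (fun i => X i ω) ∂P =
      (N.factorial : ℝ)⁻¹ * ∑ e : Perm (Fin N), F (fun i => x (e i)) := by
  have hφ : AEMeasurable (fun ω (i : Fin N) => X i ω) P :=
    (measurable_pi_lambda (fun ω (i : Fin N) => X i ω) fun i => hXm i).aemeasurable
  rw [← integral_map (f := F) hφ hF.aestronglyMeasurable, hX, integral_smul_measure,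
    integral_finsetSum_measure fun e _ => integrable_dirac enorm_lt_top]
  simp

theorem improved_serfling_mgf_bound_general
    {Ω : Type*} [MeasurableSpace Ω] (P : Measure Ω)
    (N n : ℕ) (hn1 : 1 ≤ n) (hn : n ≤ N - 1) (x : Fin N → ℝ)
    (X : ℕ → Ω → ℝ) (hXm : ∀ i, Measurable (X i))
    (hX : samplesWithoutReplacement P N x X)
    (a b : ℝ) (ha : IsLeast (Set.range x) a) (hb : IsGreatest (Set.range x) b)
    (μ : ℝ) (hμ : μ = (∑ i, x i) / N)
    (l : ℝ) :
    Real.log (∫ ω, Real.exp (l * ∑ t ∈ Finset.range n, (X t ω - μ)) ∂P) ≤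
      (b - a) ^ 2 / 8 * l ^ 2 * ((n : ℝ) + 1) * (1 - (n : ℝ) / N) := by
  have hnN : n < N := by omega
  have hx : ∀ i, x i ∈ Set.Icc a b := fun i => ⟨ha.2 ⟨i, rfl⟩, hb.2 ⟨i, rfl⟩⟩
  have hmgf : ∫ ω, exp (l * ∑ t ∈ range n, (X t ω - μ)) ∂P =
      (N.factorial : ℝ)⁻¹ * ∑ e : Perm (Fin N), exp (l * prefixDeviation x n e) := by
    simpa [← Fin.sum_filter_val_lt_eq_sum_range hnN.le, prefixDeviation, hμ] using
      integral_comp_of_samplesWithoutReplacement hX hXm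
        (F := fun v => exp (l * ∑ t : Fin N with t.val < n, (v t - μ))) (by fun_prop)
  have hserfling := sum_exp_mul_prefixDeviation_le (n := N - n) (by omega) x hx (-l)
  rw [← sum_exp_mul_prefixDeviation_eq_complement hnN.le] at hserfling
  rw [hmgf, Real.log_le_iff_le_exp (by positivity), inv_mul_le_iff₀ (by positivity)]
  refine hserfling.trans_eq ?_
  have hN : (N : ℝ) ≠ 0 := Nat.cast_ne_zero.mpr (by omega)
  rw [Nat.cast_sub hnN.le]
  congr 2
  field_simp
  ring

/-- Improved Serfling moment-generating-function bound (Bardenet–Maillard, Prop. 3):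
`log E[exp(λ n Z_n)] ≤ ((b-a)²/8) λ² (n+1)(1 - n/N)`. -/
theorem improved_serfling_mgf_bound
    {Ω : Type*} [MeasurableSpace Ω] (P : Measure Ω) [IsProbabilityMeasure P]
    (N n : ℕ) (hN : 1 < N) (hn1 : 1 ≤ n) (hn : n ≤ N - 1) (x : Fin N → ℝ)
    (X : ℕ → Ω → ℝ) (hXm : ∀ i, Measurable (X i))
    (hX : samplesWithoutReplacement P N x X)
    (a b : ℝ) (ha : IsLeast (Set.range x) a) (hb : IsGreatest (Set.range x) b)
    (μ : ℝ) (hμ : μ = (∑ i, x i) / N)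
    (l : ℝ) (hl : 0 < l) :
    Real.log (∫ ω, Real.exp (l * ∑ t ∈ Finset.range n, (X t ω - μ)) ∂P) ≤
      (b - a) ^ 2 / 8 * l ^ 2 * ((n : ℝ) + 1) * (1 - (n : ℝ) / N) :=
  improved_serfling_mgf_bound_general P N n hn1 hn x X hXm hX a b ha hb μ hμ l
end

section
/- Let X_1,...,X_N be sampled without replacement from a finite population of N > 1 reals with mean μ, minimum a and maximum b. Then for all ε > 0 and n < N, P(max_{n≤k≤N−1} (1/k)∑_{t=1}^k (X_t − μ) ≥ ε) ≤ exp(−2nε²/((1 − n/N)(1 + 1/n)(b−a)²)). -/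
/-!
Under sampling without replacement the ordering `e` of the population is a uniform permutation,
and the centred prefix means `Y k = (1/k) ∑_{t<k} (x (e t) - μ)` form a reverse martingale:
averaging `Y k` over the reshufflings of the first `k + 1` positions gives back `Y (k + 1)`.
Given `Y (k + 1)`, `Y k` only depends on the one entry dropped from the prefix, so it ranges over
an interval of length `(b - a) / k`, and Hoeffding's lemma bounds its conditional moment generating
function. Iterating from `Y N = 0` gives `E exp (l Y n) ≤ exp (l² (b - a)² / 8 ∑_{k=n}^{N-1} 1/k²)`.
Doob's maximal inequality for the reverse submartingale `exp (l Y k)`, the estimate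
`∑_{k=n}^{N-1} 1/k² ≤ (1 - n/N)(1 + 1/n)/n` and the choice of `l` finish the proof.

All expectations are finite averages over permutations; conditioning on the entries in positions
`≥ k` is averaging over right cosets of the subgroup of permutations fixing those positions.
-/

open MeasureTheory Finset Real
open scoped ENNReal

open ProbabilityTheory

section FiniteAverages

variable {α : Type*} [Fintype α] [Nonempty α]

theorem sum_exp_mul_le_of_mem_Icc {X : α → ℝ} {a b : ℝ} (hX : ∀ i, X i ∈ Set.Icc a b) (t : ℝ) :
    ∑ i, exp (t * X i) ≤
      Fintype.card α * exp (t * ((∑ i, X i) / Fintype.card α) + t ^ 2 * (b - a) ^ 2 / 8) := by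
  let _ : MeasurableSpace α := ⊤
  set μ := (PMF.uniformOfFintype α).toMeasure
  set m := (∑ i, X i) / Fintype.card α
  have hcard : (0 : ℝ) < Fintype.card α := by exact_mod_cast Fintype.card_pos
  have integral_eq (f : α → ℝ) : ∫ i, f i ∂μ = (∑ i, f i) / Fintype.card α := by
    simp [μ, PMF.integral_eq_sum, mul_sum, div_eq_inv_mul]
  have hoeffding := (hasSubgaussianMGF_of_mem_Icc (μ := μ) (X := X)
    (measurable_of_countable X).aemeasurable (ae_of_all _ hX)).mgf_le t
  rw [mgf, integral_eq, integral_eq, div_le_iff₀ hcard] at hoeffding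
  have hvar : (((‖b - a‖₊ / 2) ^ 2 : NNReal) : ℝ) * t ^ 2 / 2 = t ^ 2 * (b - a) ^ 2 / 8 := by
    push_cast
    rw [Real.norm_eq_abs, div_pow, sq_abs]
    ring
  calc ∑ i, exp (t * X i) = exp (t * m) * ∑ i, exp (t * (X i - m)) := by
        rw [mul_sum]
        exact sum_congr rfl fun i _ => by rw [← exp_add]; ring_nf
    _ ≤ exp (t * m) * (exp (t ^ 2 * (b - a) ^ 2 / 8) * Fintype.card α) := by
        rw [← hvar]
        gcongr
    _ = _ := by rw [mul_comm _ (Fintype.card α : ℝ), mul_left_comm, ← exp_add]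

theorem card_mul_exp_le_sum_exp (f : α → ℝ) :
    Fintype.card α * exp ((∑ i, f i) / Fintype.card α) ≤ ∑ i, exp (f i) := by
  have hcard : (0 : ℝ) < Fintype.card α := by exact_mod_cast Fintype.card_pos
  have jensen := convexOn_exp.map_sum_le (t := univ) (w := fun _ => (Fintype.card α : ℝ)⁻¹)
    (p := f) (fun _ _ => by positivity) (by simp [hcard.ne']) (fun _ _ => Set.mem_univ _)
  simp only [smul_eq_mul, ← mul_sum] at jensen
  rw [div_eq_inv_mul]
  calc _ ≤ (Fintype.card α : ℝ) * ((Fintype.card α : ℝ)⁻¹ * ∑ i, exp (f i)) := by gcongr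
    _ = _ := by field_simp

end FiniteAverages

theorem le_mul_exp_neg_of_forall_mul_exp_le {A B ε s : ℝ} (hε : 0 ≤ ε) (hs : 0 ≤ s)
    (h : ∀ l, 0 ≤ l → A * exp (l * ε) ≤ B * exp (l ^ 2 * s / 8)) :
    A ≤ B * exp (-(2 * ε ^ 2) / s) := by
  obtain rfl | hs := hs.eq_or_lt
  · simpa using h 0 le_rfl
  have hl := h (4 * ε / s) (by positivity)
  rw [← le_div_iff₀ (exp_pos _), mul_div_assoc, ← exp_sub] at hl
  have hexp : (4 * ε / s) ^ 2 * s / 8 - 4 * ε / s * ε = -(2 * ε ^ 2) / s := by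
    field_simp
    ring
  rwa [hexp] at hl

theorem sum_Ico_one_div_sq_le {n N : ℕ} (hn : 1 ≤ n) (hnN : n ≤ N) :
    ∑ j ∈ Ico n N, 1 / (j : ℝ) ^ 2 ≤ (1 - (n : ℝ) / N) * (1 + 1 / (n : ℝ)) / n := by
  have hn0 : (0 : ℝ) < n := by exact_mod_cast hn
  have hN0 : (0 : ℝ) < N := by exact_mod_cast hn.trans hnN
  have hterm : ∀ j ∈ Ico n N,
      1 / (j : ℝ) ^ 2 ≤ (1 + 1 / (n : ℝ)) * (1 / j - 1 / ((j + 1 : ℕ) : ℝ)) := by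
    intro j hj
    have hnj : (n : ℝ) ≤ j := by exact_mod_cast (mem_Ico.1 hj).1
    have hj0 : (0 : ℝ) < j := hn0.trans_le hnj
    rw [div_le_iff₀ (by positivity)]
    push_cast
    field_simp
    nlinarith
  calc ∑ j ∈ Ico n N, 1 / (j : ℝ) ^ 2
      ≤ ∑ j ∈ Ico n N, (1 + 1 / (n : ℝ)) * (1 / j - 1 / ((j + 1 : ℕ) : ℝ)) := sum_le_sum hterm
    _ = (1 + 1 / (n : ℝ)) * (1 / n - 1 / N) := by
        rw [← mul_sum]
        congr 1
        convert sum_Ico_sub (f := fun j : ℕ => -(1 / (j : ℝ))) hnN using 1 <;>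
          simp [sub_eq_add_neg, add_comm]
    _ = _ := by field_simp

theorem mul_card_le_sum_of_subset {ι : Type*} [DecidableEq ι] {s t : Finset ι} {c : ℝ}
    {f : ι → ℝ} (hts : t ⊆ s) (ht : c * #t ≤ ∑ i ∈ t, f i) (hc : ∀ i ∈ s \ t, c ≤ f i) :
    c * #s ≤ ∑ i ∈ s, f i := by
  have hrest := card_nsmul_le_sum _ _ c hc
  rw [nsmul_eq_mul] at hrest
  rw [← card_sdiff_add_card_eq_card hts, ← sum_sdiff hts, Nat.cast_add, mul_add]
  linarith

section FiniteGroup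

variable {G : Type*} [Group G] [Fintype G]

theorem sum_sum_mul_subgroup (H : Subgroup G) [Fintype H] {M : Type*} [AddCommMonoid M]
    (f : G → M) : ∑ g, ∑ h : H, f (g * h) = Fintype.card H • ∑ g, f g := by
  rw [sum_comm, ← card_univ, ← sum_const]
  exact sum_congr rfl fun h _ => Fintype.sum_equiv (Equiv.mulRight (h : G)) _ _ fun _ => rfl

theorem sum_le_sum_of_card_mul_le_sum_mul_subgroup {H : Subgroup G} [Fintype H] {u f : G → ℝ}
    {E : Finset G} (hE : ∀ g, ∀ h ∈ H, g * h ∈ E ↔ g ∈ E)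
    (hu : ∀ g, Fintype.card H * u g ≤ ∑ h : H, f (g * h)) :
    ∑ g ∈ E, u g ≤ ∑ g ∈ E, f g := by
  classical
  have hcard : (0 : ℝ) < Fintype.card H := by exact_mod_cast Fintype.card_pos
  refine le_of_mul_le_mul_left ?_ hcard
  calc Fintype.card H * ∑ g ∈ E, u g = ∑ g, if g ∈ E then Fintype.card H * u g else 0 := by
        rw [mul_sum, sum_ite_mem, univ_inter]
    _ ≤ ∑ g, ∑ h : H, if (g * h : G) ∈ E then f (g * h) else 0 := by
        gcongr with g
        split_ifs with hg
        · exact (hu g).trans_eq (sum_congr rfl fun h _ => by rw [if_pos ((hE g h h.2).2 hg)])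
        · exact (sum_eq_zero fun (h : H) _ => if_neg ((hE g h h.2).not.2 hg)).ge
    _ = Fintype.card H * ∑ g ∈ E, f g := by
        rw [sum_sum_mul_subgroup H (fun g => if g ∈ E then f g else 0), nsmul_eq_mul,
          sum_ite_mem, univ_inter]

/-- Doob's maximal inequality for a reverse submartingale under the uniform measure on `G`:
`hinv` says that `Z j` is constant on the right cosets of `H k` for `k ≤ j`, and `hsub` that
`Z (k + 1)` is dominated by the average of `Z k` over each right coset of `H (k + 1)`. -/
theorem mul_card_le_sum_of_reverse_submartingale (H : ℕ → Subgroup G) [∀ k, Fintype (H k)]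
    (Z : ℕ → G → ℝ) {n m : ℕ} (hinv : ∀ k j, k ≤ j → ∀ g, ∀ h ∈ H k, Z j (g * h) = Z j g)
    (hsub : ∀ k, n ≤ k → k + 1 < m → ∀ g,
      Fintype.card (H (k + 1)) * Z (k + 1) g ≤ ∑ h : H (k + 1), Z k (g * h))
    (c : ℝ) :
    c * #{g | ∃ j ∈ Ico n m, c ≤ Z j g} ≤ ∑ g with ∃ j ∈ Ico n m, c ≤ Z j g, Z n g := by
  classical
  rcases lt_or_ge m n with hmn | hnm
  · simp [Ico_eq_empty_of_le hmn.le]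
  set E : ℕ → Finset G := fun k => {g | ∃ j ∈ Ico k m, c ≤ Z j g}
  have mem_E {k g} : g ∈ E k ↔ ∃ j ∈ Ico k m, c ≤ Z j g := by simp [E]
  have E_eq_empty {k} (hk : m ≤ k) : E k = ∅ := by
    ext g
    simp only [mem_E, notMem_empty, iff_false]
    rintro ⟨j, hj, -⟩
    rw [mem_Ico] at hj
    omega
  suffices c * #(E n) ≤ ∑ g ∈ E n, Z n g by simpa [E]
  refine Nat.decreasingInduction' (P := fun k => c * #(E k) ≤ ∑ g ∈ E k, Z k g)
    (fun k hkm hnk ih => ?_) hnm (by simp [E_eq_empty le_rfl])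
  have hE : ∀ g, ∀ h ∈ H (k + 1), g * h ∈ E (k + 1) ↔ g ∈ E (k + 1) := fun g h hh => by
    simp only [mem_E]
    exact exists_congr fun j => and_congr_right fun hj => by
      rw [hinv (k + 1) j (mem_Ico.1 hj).1 g h hh]
  have hstep : ∑ g ∈ E (k + 1), Z (k + 1) g ≤ ∑ g ∈ E (k + 1), Z k g := by
    rcases (Nat.succ_le_of_lt hkm).lt_or_eq with hkm' | hkm'
    · exact sum_le_sum_of_card_mul_le_sum_mul_subgroup hE (hsub k hnk hkm')
    · simp [E_eq_empty hkm'.ge]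
  refine mul_card_le_sum_of_subset (fun g hg => ?_) (ih.trans hstep) fun g hg => ?_
  · obtain ⟨j, hj, hc⟩ := mem_E.1 hg
    exact mem_E.2 ⟨j, Ico_subset_Ico_left k.le_succ hj, hc⟩
  · obtain ⟨⟨j, hj, hc⟩, hnot⟩ := (mem_sdiff.1 hg).imp_left mem_E.1
    obtain rfl | hkj := (mem_Ico.1 hj).1.eq_or_lt
    · exact hc
    · exact absurd (mem_E.2 ⟨j, mem_Ico.2 ⟨hkj, (mem_Ico.1 hj).2⟩, hc⟩) hnot

end FiniteGroup

section PrefixSums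

variable {N : ℕ} {M : Type*} [AddCommMonoid M]

theorem sum_filter_val_lt_eq_sum_range {k : ℕ} (hk : k ≤ N) (f : ℕ → M) :
    ∑ i : Fin N with i.val < k, f i = ∑ t ∈ range k, f t := by
  have : (univ.filter fun i : Fin N => ↑i < k).map Fin.valEmbedding = range k := by
    ext t
    simp only [mem_map, mem_filter, mem_univ, true_and, Fin.valEmbedding_apply, mem_range]
    exact ⟨fun ⟨i, hi, hit⟩ => hit ▸ hi, fun ht => ⟨⟨t, by omega⟩, ht, rfl⟩⟩
  rw [← this, sum_map]
  rfl

theorem sum_filter_val_lt_succ {k : ℕ} (hk : k < N) (f : Fin N → M) :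
    ∑ i : Fin N with i.val < k + 1, f i = ∑ i : Fin N with i.val < k, f i + f ⟨k, hk⟩ := by
  have : univ.filter (fun i : Fin N => ↑i < k + 1) =
      insert ⟨k, hk⟩ (univ.filter fun i : Fin N => ↑i < k) := by
    ext i
    simp only [mem_filter, mem_univ, true_and, mem_insert, Fin.ext_iff]
    omega
  rw [this, sum_insert (by simp), add_comm]

end PrefixSums

section Orderings

variable {N : ℕ}

def prefixPerms (N k : ℕ) : Subgroup (Equiv.Perm (Fin N)) :=
  fixingSubgroup (Equiv.Perm (Fin N)) {i : Fin N | k ≤ i}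

theorem mem_prefixPerms {k : ℕ} {σ : Equiv.Perm (Fin N)} :
    σ ∈ prefixPerms N k ↔ ∀ i : Fin N, k ≤ (i : ℕ) → σ i = i := by
  simp [prefixPerms, mem_fixingSubgroup_iff, Equiv.Perm.smul_def]

instance (k : ℕ) : DecidablePred (· ∈ prefixPerms N k) := fun _ =>
  decidable_of_iff _ mem_prefixPerms.symm

noncomputable def prefixMean (d : Fin N → ℝ) (k : ℕ) (e : Equiv.Perm (Fin N)) : ℝ :=
  (∑ i : Fin N with i.val < k, d (e i)) / k

theorem sum_filter_val_lt_comp_of_mem_prefixPerms {k j : ℕ} {σ : Equiv.Perm (Fin N)}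
    (hσ : σ ∈ prefixPerms N k) (hkj : k ≤ j) (f : Fin N → ℝ) :
    ∑ i : Fin N with i.val < j, f (σ i) = ∑ i : Fin N with i.val < j, f i :=
  Equiv.Perm.sum_comp σ _ f fun i hi => by
    by_contra hij
    simp only [coe_filter, mem_univ, true_and, Set.mem_ofPred_eq, not_lt] at hij
    exact hi (mem_prefixPerms.1 hσ i (hkj.trans hij))

/-- Right multiplication by the swap `(t j)` shows that `∑ σ, f (σ j)` is the same for all
positions `j < k`. -/
theorem mul_sum_prefixPerms_apply {k : ℕ} (hk : k ≤ N) {t : Fin N} (ht : (t : ℕ) < k)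
    (f : Fin N → ℝ) :
    k * ∑ σ : prefixPerms N k, f ((σ : Equiv.Perm (Fin N)) t) =
      Fintype.card (prefixPerms N k) * ∑ i : Fin N with i.val < k, f i := by
  have swap_mem {j : Fin N} (hj : (j : ℕ) < k) : Equiv.swap t j ∈ prefixPerms N k :=
    mem_prefixPerms.2 fun i hi => Equiv.swap_apply_of_ne_of_ne (by rintro rfl; omega)
      (by rintro rfl; omega)
  have hconst : ∀ j ∈ univ.filter (fun j : Fin N => ↑j < k),
      ∑ σ : prefixPerms N k, f ((σ : Equiv.Perm (Fin N)) j) =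
        ∑ σ : prefixPerms N k, f ((σ : Equiv.Perm (Fin N)) t) := fun j hj =>
    Fintype.sum_equiv (Equiv.mulRight ⟨_, swap_mem (mem_filter.1 hj).2⟩) _ _ fun σ => by
      simp [Equiv.swap_apply_left]
  calc (k : ℝ) * ∑ σ : prefixPerms N k, f ((σ : Equiv.Perm (Fin N)) t)
      = ∑ j : Fin N with j.val < k, ∑ σ : prefixPerms N k, f ((σ : Equiv.Perm (Fin N)) j) := by
        rw [sum_congr rfl hconst, sum_const, Fin.card_filter_val_lt, min_eq_right hk,
          nsmul_eq_mul]
    _ = ∑ σ : prefixPerms N k, ∑ j : Fin N with j.val < k, f ((σ : Equiv.Perm (Fin N)) j) :=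
        sum_comm
    _ = _ := by
        rw [sum_congr rfl fun σ _ => sum_filter_val_lt_comp_of_mem_prefixPerms σ.2 le_rfl f,
          sum_const, card_univ, nsmul_eq_mul]

variable {d : Fin N → ℝ}

theorem prefixMean_mul_of_mem_prefixPerms {k j : ℕ} {σ : Equiv.Perm (Fin N)}
    (hσ : σ ∈ prefixPerms N k) (hkj : k ≤ j) (e : Equiv.Perm (Fin N)) :
    prefixMean d j (e * σ) = prefixMean d j e := by
  simp only [prefixMean, Equiv.Perm.mul_apply,
    sum_filter_val_lt_comp_of_mem_prefixPerms hσ hkj fun i => d (e i)]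

theorem prefixMean_mul_of_mem_prefixPerms_succ {k : ℕ} (hkN : k < N) {σ : Equiv.Perm (Fin N)}
    (hσ : σ ∈ prefixPerms N (k + 1)) (e : Equiv.Perm (Fin N)) :
    prefixMean d k (e * σ) = ((k + 1) * prefixMean d (k + 1) e - d (e (σ ⟨k, hkN⟩))) / k := by
  have hsplit := sum_filter_val_lt_succ hkN fun i => d (e (σ i))
  rw [sum_filter_val_lt_comp_of_mem_prefixPerms hσ le_rfl fun i => d (e i)] at hsplit
  simp only [prefixMean, Nat.cast_add, Nat.cast_one, Equiv.Perm.mul_apply]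
  rw [mul_div_cancel₀ _ (by positivity), hsplit, add_sub_cancel_right]

theorem sum_prefixMean_mul {k : ℕ} (hk : 1 ≤ k) (hkN : k < N) (e : Equiv.Perm (Fin N)) :
    ∑ σ : prefixPerms N (k + 1), prefixMean d k (e * σ) =
      Fintype.card (prefixPerms N (k + 1)) * prefixMean d (k + 1) e := by
  set c : ℝ := (Fintype.card (prefixPerms N (k + 1)) : ℝ)
  set S := ∑ i : Fin N with i.val < k + 1, d (e i)
  have hdropped : ∑ σ : prefixPerms N (k + 1), d (e ((σ : Equiv.Perm (Fin N)) ⟨k, hkN⟩)) =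
      c * S / (k + 1) := by
    rw [eq_div_iff (by positivity), mul_comm]
    exact_mod_cast mul_sum_prefixPerms_apply hkN (t := ⟨k, hkN⟩) k.lt_succ_self fun i => d (e i)
  simp only [sum_congr rfl fun (σ : prefixPerms N (k + 1)) _ =>
      prefixMean_mul_of_mem_prefixPerms_succ hkN σ.2 e,
    ← sum_div, sum_sub_distrib, sum_const, card_univ, nsmul_eq_mul, hdropped]
  simp only [prefixMean, Nat.cast_add, Nat.cast_one]
  have : (k : ℝ) ≠ 0 := by positivity
  field_simp
  ring

theorem prefixMean_eq_zero_of_sum_eq_zero (hsum : ∑ i, d i = 0) (e : Equiv.Perm (Fin N)) :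
    prefixMean d N e = 0 := by
  simp [prefixMean, Equiv.sum_comp e d, hsum]

theorem card_mul_exp_prefixMean_le {k : ℕ} (hk : 1 ≤ k) (hkN : k < N) (l : ℝ)
    (e : Equiv.Perm (Fin N)) :
    Fintype.card (prefixPerms N (k + 1)) * exp (l * prefixMean d (k + 1) e) ≤
      ∑ σ : prefixPerms N (k + 1), exp (l * prefixMean d k (e * σ)) := by
  have hcard : (0 : ℝ) < Fintype.card (prefixPerms N (k + 1)) := by
    exact_mod_cast Fintype.card_pos
  convert card_mul_exp_le_sum_exp fun σ : prefixPerms N (k + 1) => l * prefixMean d k (e * σ)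
  rw [← mul_sum, sum_prefixMean_mul hk hkN, mul_div_assoc, mul_div_cancel_left₀ _ hcard.ne']

variable {a b : ℝ}

theorem sum_exp_prefixMean_mul_le (hd : ∀ i, d i ∈ Set.Icc a b) {k : ℕ} (hk : 1 ≤ k)
    (hkN : k < N) (l : ℝ) (e : Equiv.Perm (Fin N)) :
    ∑ σ : prefixPerms N (k + 1), exp (l * prefixMean d k (e * σ)) ≤
      Fintype.card (prefixPerms N (k + 1)) *
        exp (l * prefixMean d (k + 1) e + l ^ 2 * (b - a) ^ 2 / (8 * k ^ 2)) := by
  set T := (k + 1) * prefixMean d (k + 1) e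
  have hmem : ∀ σ : prefixPerms N (k + 1),
      prefixMean d k (e * σ) ∈ Set.Icc ((T - b) / k) ((T - a) / k) := by
    intro σ
    rw [prefixMean_mul_of_mem_prefixPerms_succ hkN σ.2]
    obtain ⟨ha, hb⟩ := hd (e ((σ : Equiv.Perm (Fin N)) ⟨k, hkN⟩))
    constructor <;> gcongr
  have hcard : (0 : ℝ) < Fintype.card (prefixPerms N (k + 1)) := by
    exact_mod_cast Fintype.card_pos
  convert sum_exp_mul_le_of_mem_Icc hmem l using 3
  rw [sum_prefixMean_mul hk hkN, mul_div_cancel_left₀ _ hcard.ne', div_sub_div_same,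
    sub_sub_sub_cancel_left, div_pow]
  ring

theorem sum_exp_prefixMean_le (hd : ∀ i, d i ∈ Set.Icc a b) {k : ℕ} (hk : 1 ≤ k) (hkN : k < N)
    (l : ℝ) :
    ∑ e, exp (l * prefixMean d k e) ≤
      exp (l ^ 2 * (b - a) ^ 2 / (8 * k ^ 2)) * ∑ e, exp (l * prefixMean d (k + 1) e) := by
  set H := prefixPerms N (k + 1)
  have hcard : (0 : ℝ) < Fintype.card H := by exact_mod_cast Fintype.card_pos
  refine le_of_mul_le_mul_left ?_ hcard
  calc (Fintype.card H : ℝ) * ∑ e, exp (l * prefixMean d k e)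
      = ∑ e, ∑ σ : H, exp (l * prefixMean d k (e * σ)) := by
        rw [sum_sum_mul_subgroup H fun e => exp (l * prefixMean d k e), nsmul_eq_mul]
    _ ≤ ∑ e, Fintype.card H *
          exp (l * prefixMean d (k + 1) e + l ^ 2 * (b - a) ^ 2 / (8 * k ^ 2)) :=
        sum_le_sum fun e _ => sum_exp_prefixMean_mul_le hd hk hkN l e
    _ = _ := by
        rw [mul_left_comm, mul_sum, mul_sum]
        exact sum_congr rfl fun e _ => by rw [exp_add]; ring

theorem sum_exp_prefixMean_le_factorial (hd : ∀ i, d i ∈ Set.Icc a b) (hsum : ∑ i, d i = 0)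
    {n : ℕ} (hn : 1 ≤ n) (hnN : n ≤ N) (l : ℝ) :
    ∑ e, exp (l * prefixMean d n e) ≤
      N.factorial * exp (l ^ 2 * (b - a) ^ 2 / 8 * ∑ j ∈ Ico n N, 1 / (j : ℝ) ^ 2) := by
  refine Nat.decreasingInduction' (P := fun k => ∑ e, exp (l * prefixMean d k e) ≤
      N.factorial * exp (l ^ 2 * (b - a) ^ 2 / 8 * ∑ j ∈ Ico k N, 1 / (j : ℝ) ^ 2))
    (fun k hkN hnk ih => ?_) hnN ?_
  · calc ∑ e, exp (l * prefixMean d k e)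
        ≤ exp (l ^ 2 * (b - a) ^ 2 / (8 * k ^ 2)) * ∑ e, exp (l * prefixMean d (k + 1) e) :=
          sum_exp_prefixMean_le hd (hn.trans hnk) hkN l
      _ ≤ exp (l ^ 2 * (b - a) ^ 2 / (8 * k ^ 2)) * (N.factorial *
            exp (l ^ 2 * (b - a) ^ 2 / 8 * ∑ j ∈ Ico (k + 1) N, 1 / (j : ℝ) ^ 2)) := by gcongr
      _ = _ := by
          rw [sum_eq_sum_Ico_succ_bot hkN, mul_left_comm, ← exp_add]
          congr 2
          ring
  · simp [prefixMean_eq_zero_of_sum_eq_zero hsum, Fintype.card_perm]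

theorem card_exists_prefixMean_ge_mul_exp_le (hd : ∀ i, d i ∈ Set.Icc a b)
    (hsum : ∑ i, d i = 0) {n : ℕ} (hn : 1 ≤ n) (hnN : n ≤ N) (ε : ℝ) {l : ℝ} (hl : 0 ≤ l) :
    #{e : Equiv.Perm (Fin N) | ∃ k ∈ Ico n N, ε ≤ prefixMean d k e} * exp (l * ε) ≤
      N.factorial * exp (l ^ 2 * (b - a) ^ 2 / 8 * ∑ j ∈ Ico n N, 1 / (j : ℝ) ^ 2) := by
  have hdoob := mul_card_le_sum_of_reverse_submartingale (prefixPerms N)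
    (fun k e => exp (l * prefixMean d k e)) (n := n) (m := N)
    (fun k j hkj e σ hσ => by rw [prefixMean_mul_of_mem_prefixPerms hσ hkj])
    (fun k hnk hkN e => card_mul_exp_prefixMean_le (hn.trans hnk) (by omega) l e) (exp (l * ε))
  have hcard : #{e : Equiv.Perm (Fin N) | ∃ k ∈ Ico n N, ε ≤ prefixMean d k e} ≤
      #{e : Equiv.Perm (Fin N) | ∃ k ∈ Ico n N, exp (l * ε) ≤ exp (l * prefixMean d k e)} :=
    card_le_card fun e he => by
      obtain ⟨k, hk, hεk⟩ := (mem_filter.1 he).2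
      exact mem_filter.2 ⟨mem_univ e, k, hk, exp_le_exp.2 (mul_le_mul_of_nonneg_left hεk hl)⟩
  calc _ ≤ exp (l * ε) *
        #{e : Equiv.Perm (Fin N) | ∃ k ∈ Ico n N, exp (l * ε) ≤ exp (l * prefixMean d k e)} := by
        rw [mul_comm]
        gcongr
    _ ≤ ∑ e, exp (l * prefixMean d n e) :=
        hdoob.trans (sum_le_sum_of_subset_of_nonneg (subset_univ _) fun _ _ _ => (exp_pos _).le)
    _ ≤ _ := sum_exp_prefixMean_le_factorial hd hsum hn hnN l

theorem card_exists_prefixMean_ge_le (hd : ∀ i, d i ∈ Set.Icc a b) (hsum : ∑ i, d i = 0)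
    {n : ℕ} (hn : 1 ≤ n) (hnN : n < N) {ε : ℝ} (hε : 0 ≤ ε) :
    (#{e : Equiv.Perm (Fin N) | ∃ k ∈ Ico n N, ε ≤ prefixMean d k e} : ℝ) ≤
      N.factorial *
        exp (-(2 * n * ε ^ 2) / ((1 - (n : ℝ) / N) * (1 + 1 / (n : ℝ)) * (b - a) ^ 2)) := by
  set R := (1 - (n : ℝ) / N) * (1 + 1 / (n : ℝ))
  have hR := sum_Ico_one_div_sq_le hn hnN.le
  have hs : 0 ≤ (b - a) ^ 2 * R / n := by
    rw [mul_div_assoc]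
    exact mul_nonneg (sq_nonneg _) ((sum_nonneg fun j _ => by positivity).trans hR)
  rw [show -(2 * n * ε ^ 2) / (R * (b - a) ^ 2) = -(2 * ε ^ 2) / ((b - a) ^ 2 * R / n) by
    rw [div_div_eq_mul_div]; ring]
  refine le_mul_exp_neg_of_forall_mul_exp_le hε hs fun l hl =>
    (card_exists_prefixMean_ge_mul_exp_le hd hsum hn hnN.le ε hl).trans ?_
  rw [show l ^ 2 * ((b - a) ^ 2 * R / n) / 8 = l ^ 2 * (b - a) ^ 2 / 8 * (R / n) by ring]
  gcongr

end Orderings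

theorem samplesWithoutReplacement.measure_preimage_le {Ω : Type*} [MeasurableSpace Ω]
    {P : Measure Ω} {N : ℕ} {x : Fin N → ℝ} {X : ℕ → Ω → ℝ}
    (hX : samplesWithoutReplacement P N x X) (hXm : ∀ i, Measurable (X i))
    {B : Set (Fin N → ℝ)} {A : Finset (Equiv.Perm (Fin N))}
    (hA : ∀ e : Equiv.Perm (Fin N), (fun i => x (e i)) ∈ B → e ∈ A) :
    P ((fun ω (i : Fin N) => X i ω) ⁻¹' B) ≤ #A / N.factorial := by
  classical
  calc P ((fun ω (i : Fin N) => X i ω) ⁻¹' B)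
      ≤ P.map (fun ω (i : Fin N) => X i ω) B :=
        Measure.le_map_apply (measurable_pi_lambda _ fun i : Fin N => hXm i).aemeasurable B
    _ = (N.factorial : ℝ≥0∞)⁻¹ * ∑ e : Equiv.Perm (Fin N), B.indicator 1 fun i => x (e i) := by
        rw [hX, Measure.smul_apply, Measure.finsetSum_apply, smul_eq_mul]
        simp only [Measure.dirac_apply]
    _ ≤ (N.factorial : ℝ≥0∞)⁻¹ * ∑ e : Equiv.Perm (Fin N), if e ∈ A then 1 else 0 := by
        gcongr with e
        by_cases he : (fun i => x (e i)) ∈ B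
        · simp [he, hA e he]
        · simp [he]
    _ = #A / N.factorial := by
        rw [sum_boole, filter_mem_eq_inter, univ_inter, ENNReal.div_eq_inv_mul]

/-- Hoeffding–Serfling inequality, first part (Theorem 1 of Bardenet–Maillard). -/
theorem hoeffding_serfling_first
    {Ω : Type*} [MeasurableSpace Ω] (P : Measure Ω)
    (N n : ℕ) (hn1 : 1 ≤ n) (hn : n < N) (x : Fin N → ℝ)
    (X : ℕ → Ω → ℝ) (hXm : ∀ i, Measurable (X i))
    (hX : samplesWithoutReplacement P N x X)
    (a b : ℝ) (ha : IsLeast (Set.range x) a) (hb : IsGreatest (Set.range x) b)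
    (μ : ℝ) (hμ : μ = (∑ i, x i) / N)
    (ε : ℝ) (hε : 0 < ε) :
    P {ω | (Finset.Icc n (N - 1)).sup' (Finset.nonempty_Icc.2 (by omega))
          (fun k => (∑ t ∈ Finset.range k, (X t ω - μ)) / (k : ℝ)) ≥ ε} ≤
      ENNReal.ofReal (Real.exp (-(2 * n * ε ^ 2) /
        ((1 - (n : ℝ) / N) * (1 + 1 / (n : ℝ)) * (b - a) ^ 2))) := by
  have hbounds : ∀ i, x i - μ ∈ Set.Icc (a - μ) (b - μ) := fun i =>
    ⟨sub_le_sub_right (ha.2 ⟨i, rfl⟩) μ, sub_le_sub_right (hb.2 ⟨i, rfl⟩) μ⟩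
  have hcentred : ∑ i, (x i - μ) = 0 := by
    rw [sum_sub_distrib, sum_const, card_univ, Fintype.card_fin, nsmul_eq_mul, hμ,
      mul_div_cancel₀ _ (Nat.cast_ne_zero.2 (by omega)), sub_self]
  have hcount := card_exists_prefixMean_ge_le hbounds hcentred hn1 hn hε.le
  rw [sub_sub_sub_cancel_right] at hcount
  set B : Set (Fin N → ℝ) :=
    {y | ∃ k ∈ Ico n N, ε ≤ (∑ i : Fin N with i.val < k, (y i - μ)) / k}
  refine (measure_mono fun ω hω => ?_).trans ((hX.measure_preimage_le hXm (B := B)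
    fun e he => mem_filter.2 ⟨mem_univ e, he⟩).trans ?_)
  · obtain ⟨k, hk, hεk⟩ := (le_sup'_iff _).1 (show ε ≤ _ from hω)
    rw [mem_Icc] at hk
    refine ⟨k, mem_Ico.2 ⟨hk.1, by omega⟩, ?_⟩
    rwa [← sum_filter_val_lt_eq_sum_range (N := N) (by omega) fun t => X t ω - μ] at hεk
  · refine ENNReal.div_le_of_le_mul ?_
    rw [← ENNReal.ofReal_natCast, ← ENNReal.ofReal_natCast, ← ENNReal.ofReal_mul (by positivity),
      mul_comm]
    exact ENNReal.ofReal_le_ofReal hcount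
end

section
/- Let X_1,...,X_N be sampled without replacement from a finite population of N reals with mean μ and variance σ² = (1/N)∑_{i=1}^N (x_i − μ)². Then for each 1 ≤ k ≤ N, E[(X_k − μ)² | X_1,...,X_{k−1}] = σ² − Q*_{k−1}, where Q*_{k−1} = (∑_{i=1}^{k−1} ((X_i − μ)² − σ²))/(N−k+1). -/
open MeasureTheory Finset Real
open scoped ENNReal

/-! Swapping positions `m` and `j ≥ m` of an ordering preserves the uniform law and fixes the
first `m` draws, so given those draws every remaining position has the law of position `m`.
Averaging over the `N - m` remaining positions shows that the next draw is conditionally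
uniform over the population elements not yet drawn, whose squared deviations from `μ` sum to
`N σ² - ∑_{i<m} (X_i - μ)²`. -/

section Exchangeability

variable {ι α : Type*} [Fintype ι] [DecidableEq ι] {B : Finset ι} {F : (ι → α) → ℝ}

theorem sum_perm_mul_apply_eq_of_notMem
    (hF : ∀ u v : ι → α, (∀ b ∈ B, u b = v b) → F u = F v) (x : ι → α) (g : α → ℝ)
    {i j : ι} (hi : i ∉ B) (hj : j ∉ B) :
    ∑ e : Equiv.Perm ι, F (x ∘ e) * g (x (e i)) =
      ∑ e : Equiv.Perm ι, F (x ∘ e) * g (x (e j)) := by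
  rw [← Equiv.sum_comp (Equiv.mulRight (Equiv.swap i j))]
  refine Finset.sum_congr rfl fun e _ => ?_
  have hfix : ∀ b ∈ B, (x ∘ ⇑(e * Equiv.swap i j)) b = (x ∘ e) b := fun b hb => by
    simp [Equiv.swap_apply_of_ne_of_ne (ne_of_mem_of_not_mem hb hi)
      (ne_of_mem_of_not_mem hb hj)]
  rw [Equiv.coe_mulRight, hF _ _ hfix, Equiv.Perm.mul_apply, Equiv.swap_apply_left]

theorem card_compl_mul_sum_perm_mul_apply
    (hF : ∀ u v : ι → α, (∀ b ∈ B, u b = v b) → F u = F v) (x : ι → α) (g : α → ℝ)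
    {i : ι} (hi : i ∉ B) :
    (Bᶜ.card : ℝ) * ∑ e : Equiv.Perm ι, F (x ∘ e) * g (x (e i)) =
      ∑ e : Equiv.Perm ι, F (x ∘ e) * (∑ a, g (x a) - ∑ b ∈ B, g (x (e b))) := by
  have hcompl (e : Equiv.Perm ι) :
      ∑ a, g (x a) - ∑ b ∈ B, g (x (e b)) = ∑ j ∈ Bᶜ, g (x (e j)) := by
    rw [← Equiv.sum_comp e (fun a => g (x a)), ← Finset.sum_compl_add_sum B,
      add_sub_cancel_right]
  calc (Bᶜ.card : ℝ) * ∑ e : Equiv.Perm ι, F (x ∘ e) * g (x (e i))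
      = ∑ j ∈ Bᶜ, ∑ e : Equiv.Perm ι, F (x ∘ e) * g (x (e j)) := by
        rw [Finset.sum_congr rfl fun j hj =>
          (sum_perm_mul_apply_eq_of_notMem hF x g hi (Finset.mem_compl.1 hj)).symm,
          Finset.sum_const, nsmul_eq_mul]
    _ = _ := by
        rw [Finset.sum_comm]
        simp_rw [hcompl, Finset.mul_sum]

end Exchangeability

section DiracSum

variable {β κ : Type*} [MeasurableSpace β] [MeasurableSingletonClass β]
  (s : Finset κ) (c : ℝ≥0∞) (y : κ → β) (h : β → ℝ)

theorem integrable_smul_finsetSum_dirac (hc : c ≠ ∞) :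
    Integrable h (c • ∑ i ∈ s, Measure.dirac (y i)) :=
  (integrable_finsetSum_measure.2 fun _ _ => integrable_dirac (by simp)).smul_measure hc

theorem integral_smul_finsetSum_dirac :
    ∫ v, h v ∂(c • ∑ i ∈ s, Measure.dirac (y i)) = c.toReal * ∑ i ∈ s, h (y i) := by
  rw [integral_smul_measure, integral_finsetSum_measure fun _ _ => integrable_dirac (by simp)]
  simp [integral_dirac]

end DiracSum

theorem condExp_comap_comp_ae_eq {Ω β γ : Type*} [MeasurableSpace Ω] [MeasurableSpace β]
    [MeasurableSpace γ] {P : Measure Ω} [IsFiniteMeasure P] {W : Ω → β} {ρ : β → γ}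
    {φ : β → ℝ} {G : γ → ℝ} (hW : Measurable W) (hρ : Measurable ρ) (hφ : Measurable φ)
    (hG : Measurable G) (hφi : Integrable φ (P.map W)) (hGi : Integrable (G ∘ ρ) (P.map W))
    (hset : ∀ A, MeasurableSet A →
      ∫ v in ρ ⁻¹' A, G (ρ v) ∂P.map W = ∫ v in ρ ⁻¹' A, φ v ∂P.map W) :
    P[φ ∘ W | MeasurableSpace.comap (ρ ∘ W) inferInstance] =ᵐ[P] G ∘ ρ ∘ W := by
  have hGρ : Measurable (G ∘ ρ) := hG.comp hρ
  refine (ae_eq_condExp_of_forall_setIntegral_eq (hρ.comp hW).comap_le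
    ((integrable_map_measure hφ.aestronglyMeasurable hW.aemeasurable).1 hφi)
    (fun _ _ _ => ((integrable_map_measure hGρ.aestronglyMeasurable hW.aemeasurable).1
      hGi).integrableOn) ?_ ?_).symm
  · rintro _ ⟨A, hA, rfl⟩ _
    exact (setIntegral_map (hρ hA) hGρ.aestronglyMeasurable hW.aemeasurable).symm.trans
      ((hset A hA).trans (setIntegral_map (hρ hA) hφ.aestronglyMeasurable hW.aemeasurable))
  · exact (hG.comp (Measurable.of_comap_le le_rfl)).aestronglyMeasurable

noncomputable def permutationLaw {α : Type*} [MeasurableSpace α] (N : ℕ) (x : Fin N → α) :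
    Measure (Fin N → α) :=
  (Nat.factorial N : ℝ≥0∞)⁻¹ • ∑ e : Equiv.Perm (Fin N), Measure.dirac (fun i => x (e i))

theorem measurable_take {α : Type*} [MeasurableSpace α] {m N : ℕ} (h : m ≤ N) :
    Measurable (Fin.take m h : (Fin N → α) → Fin m → α) :=
  measurable_pi_lambda _ fun _ => measurable_pi_apply _

section PermutationLaw

variable {α : Type*} [MeasurableSpace α] [MeasurableSingletonClass α] {N m : ℕ}

theorem integrable_permutationLaw (x : Fin N → α) (h : (Fin N → α) → ℝ) :
    Integrable h (permutationLaw N x) :=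
  integrable_smul_finsetSum_dirac _ _ _ _ (by simp [Nat.factorial_ne_zero])

theorem integral_permutationLaw (x : Fin N → α) (h : (Fin N → α) → ℝ) :
    ∫ v, h v ∂permutationLaw N x =
      (Nat.factorial N : ℝ)⁻¹ * ∑ e : Equiv.Perm (Fin N), h (fun i => x (e i)) := by
  rw [permutationLaw, integral_smul_finsetSum_dirac]
  simp

theorem setIntegral_take_preimage_permutationLaw (hm : m < N) (x : Fin N → α) (g : α → ℝ)
    {A : Set (Fin m → α)} (hA : MeasurableSet A) :
    ∫ v in Fin.take m hm.le ⁻¹' A, (∑ a, g (x a) - ∑ j, g (Fin.take m hm.le v j)) / (N - m)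
        ∂permutationLaw N x =
      ∫ v in Fin.take m hm.le ⁻¹' A, g (v ⟨m, hm⟩) ∂permutationLaw N x := by
  have hS : MeasurableSet (Fin.take m hm.le ⁻¹' A) := measurable_take hm.le hA
  let F : (Fin N → α) → ℝ := fun v => A.indicator 1 (Fin.take m hm.le v)
  have hind (h : (Fin N → α) → ℝ) (v : Fin N → α) :
      (Fin.take m hm.le ⁻¹' A).indicator h v = F v * h v := by
    by_cases hv : Fin.take m hm.le v ∈ A <;> simp [F, hv]
  set B : Finset (Fin N) := univ.map (Fin.castLEEmb hm.le)
  have hF : ∀ u v : Fin N → α, (∀ b ∈ B, u b = v b) → F u = F v := fun u v huv => by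
    have : Fin.take m hm.le u = Fin.take m hm.le v :=
      funext fun j => huv _ (mem_map_of_mem _ (mem_univ j))
    simp only [F, this]
  have hmB : (⟨m, hm⟩ : Fin N) ∉ B := by
    simpa [B, Fin.ext_iff] using fun j : Fin m => j.2.ne
  have hcard : ((Bᶜ).card : ℝ) = N - m := by
    rw [card_compl, card_map, card_univ, Fintype.card_fin, Fintype.card_fin, Nat.cast_sub hm.le]
  have hsumB : ∀ v : Fin N → α, ∑ b ∈ B, g (v b) = ∑ j, g (Fin.take m hm.le v j) :=
    fun v => Finset.sum_map _ _ _
  have key := card_compl_mul_sum_perm_mul_apply hF x g hmB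
  simp only [hcard, hsumB] at key
  have hNm : (N : ℝ) - m ≠ 0 := sub_ne_zero.2 (by exact_mod_cast hm.ne')
  rw [← integral_indicator hS, ← integral_indicator hS, integral_permutationLaw,
    integral_permutationLaw]
  simp only [hind]
  congr 1
  rw [← mul_right_inj' hNm, Finset.mul_sum]
  refine Eq.trans (Finset.sum_congr rfl fun e _ => ?_) key.symm
  rw [mul_div_assoc', mul_div_cancel₀ _ hNm]
  rfl

end PermutationLaw

theorem condExp_next_draw_ae_eq {Ω : Type*} [MeasurableSpace Ω] {P : Measure Ω}
    [IsFiniteMeasure P] {N m : ℕ} (hm : m < N) {x : Fin N → ℝ} {X : ℕ → Ω → ℝ}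
    (hXm : ∀ i, Measurable (X i)) (hX : samplesWithoutReplacement P N x X) {g : ℝ → ℝ}
    (hg : Measurable g) :
    P[fun ω => g (X m ω) | MeasurableSpace.comap (fun ω (j : Fin m) => X j ω) inferInstance]
      =ᵐ[P] fun ω => (∑ a, g (x a) - ∑ j : Fin m, g (X j ω)) / (N - m) := by
  have hlaw : P.map (fun ω (i : Fin N) => X i ω) = permutationLaw N x := hX
  refine condExp_comap_comp_ae_eq (W := fun ω (i : Fin N) => X i ω) (ρ := Fin.take m hm.le)
    (φ := fun v => g (v ⟨m, hm⟩)) (G := fun u => (∑ a, g (x a) - ∑ j, g (u j)) / (N - m))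
    (measurable_pi_lambda _ fun i => hXm i) (measurable_take hm.le)
    (hg.comp (measurable_pi_apply _)) ?_ (hlaw ▸ integrable_permutationLaw x _)
    (hlaw ▸ integrable_permutationLaw x _)
    (fun A hA => hlaw ▸ setIntegral_take_preimage_permutationLaw hm x g hA)
  exact (Finset.measurable_sum _ fun j _ => hg.comp (measurable_pi_apply j)).const_sub _
    |>.div_const _

theorem condexp_sq_draw_without_replacement_general
    {Ω : Type*} [MeasurableSpace Ω] (P : Measure Ω) [IsProbabilityMeasure P]
    (N : ℕ) (x : Fin N → ℝ)
    (X : ℕ → Ω → ℝ) (hXm : ∀ i, Measurable (X i))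
    (hX : samplesWithoutReplacement P N x X)
    (μ : ℝ)
    (σ2 : ℝ) (hσ2 : σ2 = (∑ i, (x i - μ) ^ 2) / N)
    (k : ℕ) (hk1 : 1 ≤ k) (hk : k ≤ N) :
    MeasureTheory.condExp
        (MeasurableSpace.comap (fun ω (j : Fin (k - 1)) => X j ω) inferInstance)
        P (fun ω => (X (k - 1) ω - μ) ^ 2)
      =ᵐ[P] fun ω =>
        σ2 - (∑ i ∈ Finset.range (k - 1), ((X i ω - μ) ^ 2 - σ2)) / ((N : ℝ) - k + 1) := by
  obtain ⟨m, rfl⟩ : ∃ m, k = m + 1 := ⟨k - 1, by omega⟩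
  have hm : m < N := by omega
  have hNm : (N : ℝ) - m ≠ 0 := sub_ne_zero.2 (by exact_mod_cast hm.ne')
  have hsum : ∑ i, (x i - μ) ^ 2 = N * σ2 := by
    rw [hσ2, mul_div_cancel₀ _ (by exact_mod_cast (Nat.zero_lt_of_lt hm).ne')]
  simp only [Nat.add_sub_cancel]
  refine (condExp_next_draw_ae_eq hm hXm hX (g := fun t => (t - μ) ^ 2) (by fun_prop)).trans
    (Filter.Eventually.of_forall fun ω => ?_)
  dsimp only
  rw [hsum, Fin.sum_univ_eq_sum_range (fun i => (X i ω - μ) ^ 2), Finset.sum_sub_distrib,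
    sum_const, card_range, nsmul_eq_mul, Nat.cast_add_one, sub_add_eq_sub_sub, sub_add_cancel]
  field_simp
  ring

/-- Lemma 3 (first part): conditional second moment of the `k`-th draw:
`E[(X_k - μ)² | X_1, …, X_{k-1}] = σ² - Q*_{k-1}` where
`Q*_{k-1} = (∑_{i=1}^{k-1} ((X_i - μ)² - σ²))/(N - k + 1)`. -/
theorem condexp_sq_draw_without_replacement
    {Ω : Type*} [MeasurableSpace Ω] (P : Measure Ω) [IsProbabilityMeasure P]
    (N : ℕ) (hN : 2 ≤ N) (x : Fin N → ℝ)
    (X : ℕ → Ω → ℝ) (hXm : ∀ i, Measurable (X i))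
    (hX : samplesWithoutReplacement P N x X)
    (μ : ℝ) (hμ : μ = (∑ i, x i) / N)
    (σ2 : ℝ) (hσ2 : σ2 = (∑ i, (x i - μ) ^ 2) / N)
    (k : ℕ) (hk1 : 1 ≤ k) (hk : k ≤ N) :
    MeasureTheory.condExp
        (MeasurableSpace.comap (fun ω (j : Fin (k - 1)) => X j ω) inferInstance)
        P (fun ω => (X (k - 1) ω - μ) ^ 2)
      =ᵐ[P] fun ω =>
        σ2 - (∑ i ∈ Finset.range (k - 1), ((X i ω - μ) ^ 2 - σ2)) / ((N : ℝ) - k + 1) :=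
  condexp_sq_draw_without_replacement_general P N x X hXm hX μ σ2 hσ2 k hk1 hk
end

section
/- Let X_1,...,X_N be sampled without replacement from a finite population of N reals with mean μ and variance σ². Then the process (−Q*_{k})_k, where Q*_k = (∑_{i=1}^{k} ((X_i − μ)² − σ²))/(N−k), is a martingale: E[−Q*_{k−1} | Q*_{k−2},...,Q*_1] = −Q*_{k−2}. -/
open MeasureTheory Finset Real
open scoped ENNReal

/-!
The law of the sample is uniform over the orderings `e` of the population, so every
conditional expectation given the first draws is an average over permutations. Write
`Y = (x - μ)² - σ²`, which sums to zero over the population. Knowing the first `m` draws,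
the next one is equally likely to be any of the `N - m` remaining elements, whose `Y`-values
sum to minus the current partial sum `S_m`: right multiplication of `e` by the transposition
of position `m` with a later position fixes the past and moves the next draw there. Hence
`E[S_{m+1} | past] = S_m (N - m - 1) / (N - m)`, i.e. `E[Q*_{m+1} | past] = Q*_m`.
-/

section Exchangeability

variable {α : Type*} [DecidableEq α] {s : Finset α} {T : Finset (Equiv.Perm α)}

theorem sum_perm_apply_eq_of_notMem {M : Type*} [AddCommMonoid M]
    (hT : ∀ e e', (∀ i ∈ s, e i = e' i) → e ∈ T → e' ∈ T) (f : α → M) {p j : α}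
    (hp : p ∉ s) (hj : j ∉ s) :
    ∑ e ∈ T, f (e p) = ∑ e ∈ T, f (e j) := by
  have hfix : ∀ e : Equiv.Perm α, ∀ i ∈ s, (e * Equiv.swap p j) i = e i := fun e i hi => by
    rw [Equiv.Perm.mul_apply, Equiv.swap_apply_of_ne_of_ne (ne_of_mem_of_not_mem hi hp)
      (ne_of_mem_of_not_mem hi hj)]
  refine Finset.sum_equiv (Equiv.mulRight (Equiv.swap p j)) (fun e => ?_) (fun e _ => ?_)
  · exact ⟨hT _ _ fun i hi => (hfix e i hi).symm, hT _ _ (hfix e)⟩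
  · simp

theorem card_compl_smul_sum_perm_apply [Fintype α] {M : Type*} [AddCommGroup M]
    (hT : ∀ e e', (∀ i ∈ s, e i = e' i) → e ∈ T → e' ∈ T) {Y : α → M} (hY : ∑ i, Y i = 0)
    {p : α} (hp : p ∉ s) :
    #sᶜ • ∑ e ∈ T, Y (e p) = -∑ e ∈ T, ∑ i ∈ s, Y (e i) := by
  have hsplit : ∀ e : Equiv.Perm α, ∑ j ∈ sᶜ, Y (e j) = -∑ i ∈ s, Y (e i) := fun e => by
    rw [eq_neg_iff_add_eq_zero, add_comm, Finset.sum_add_sum_compl, Equiv.sum_comp e Y, hY]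
  calc #sᶜ • ∑ e ∈ T, Y (e p) = ∑ j ∈ sᶜ, ∑ e ∈ T, Y (e j) := by
        rw [← Finset.sum_const]
        exact Finset.sum_congr rfl fun j hj =>
          sum_perm_apply_eq_of_notMem hT Y hp (Finset.mem_compl.mp hj)
    _ = -∑ e ∈ T, ∑ i ∈ s, Y (e i) := by
        rw [Finset.sum_comm, ← Finset.sum_neg_distrib]
        exact Finset.sum_congr rfl fun e _ => hsplit e

theorem sum_perm_sum_insert_div_card_compl [Fintype α] {𝕜 : Type*} [Field 𝕜] [CharZero 𝕜]
    (hT : ∀ e e', (∀ i ∈ s, e i = e' i) → e ∈ T → e' ∈ T) {Y : α → 𝕜} (hY : ∑ i, Y i = 0)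
    {p : α} (hp : p ∉ s) (hs : (insert p s)ᶜ.Nonempty) :
    ∑ e ∈ T, (∑ i ∈ insert p s, Y (e i)) / #(insert p s)ᶜ =
      ∑ e ∈ T, (∑ i ∈ s, Y (e i)) / #sᶜ := by
  have hcard : (#sᶜ : 𝕜) = #(insert p s)ᶜ + 1 := by
    rw [Finset.compl_insert, ← Finset.card_erase_add_one (Finset.mem_compl.mpr hp)]
    push_cast
    rfl
  have hpos : (#(insert p s)ᶜ : 𝕜) ≠ 0 := Nat.cast_ne_zero.mpr hs.card_ne_zero
  have hY' := card_compl_smul_sum_perm_apply hT hY hp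
  rw [nsmul_eq_mul, hcard] at hY'
  simp only [Finset.sum_insert hp, ← Finset.sum_div, Finset.sum_add_distrib, hcard]
  field_simp
  linear_combination hY'

end Exchangeability

theorem measurable_sample {Ω : Type*} [MeasurableSpace Ω] {X : ℕ → Ω → ℝ}
    (hXm : ∀ i, Measurable (X i)) {N : ℕ} : Measurable fun ω (i : Fin N) => X i ω :=
  measurable_pi_lambda _ fun i => hXm i

namespace samplesWithoutReplacement

variable {Ω : Type*} [MeasurableSpace Ω] {P : Measure Ω} {N : ℕ} {x : Fin N → ℝ}
  {X : ℕ → Ω → ℝ}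

theorem integrable_comp (hX : samplesWithoutReplacement P N x X)
    (hXm : ∀ i, Measurable (X i)) {f : (Fin N → ℝ) → ℝ} (hf : Measurable f) :
    Integrable (fun ω => f fun i : Fin N => X i ω) P := by
  refine (integrable_map_measure hf.aestronglyMeasurable
    (measurable_sample hXm).aemeasurable).mp ?_
  rw [hX]
  refine Integrable.smul_measure ?_ (by simp [Nat.factorial_ne_zero])
  exact (integrable_finsetSum_measure).mpr fun e _ =>
    ⟨hf.aestronglyMeasurable, by simp [HasFiniteIntegral]⟩

theorem integral_comp (hX : samplesWithoutReplacement P N x X)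
    (hXm : ∀ i, Measurable (X i)) {f : (Fin N → ℝ) → ℝ} (hf : Measurable f) :
    ∫ ω, f (fun i : Fin N => X i ω) ∂P =
      (N.factorial : ℝ)⁻¹ * ∑ e : Equiv.Perm (Fin N), f fun i => x (e i) := by
  rw [← integral_map (measurable_sample hXm).aemeasurable hf.aestronglyMeasurable, hX,
    integral_smul_measure, integral_finsetSum_measure
      fun e _ => ⟨hf.aestronglyMeasurable, by simp [HasFiniteIntegral]⟩]
  simp [integral_dirac]

open scoped Classical in
theorem setIntegral_comp (hX : samplesWithoutReplacement P N x X)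
    (hXm : ∀ i, Measurable (X i)) {f : (Fin N → ℝ) → ℝ} (hf : Measurable f)
    {B : Set (Fin N → ℝ)} (hB : MeasurableSet B) :
    ∫ ω in (fun ω (i : Fin N) => X i ω) ⁻¹' B, f (fun i : Fin N => X i ω) ∂P =
      (N.factorial : ℝ)⁻¹ * ∑ e : Equiv.Perm (Fin N) with (fun i => x (e i)) ∈ B,
        f (fun i => x (e i)) := by
  rw [← integral_indicator (measurable_sample hXm hB), Finset.sum_filter]
  exact hX.integral_comp hXm (hf.indicator hB)

open scoped Classical in
theorem condExp_comp_ae_eq [IsFiniteMeasure P] (hX : samplesWithoutReplacement P N x X)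
    (hXm : ∀ i, Measurable (X i)) {β : Type*} [MeasurableSpace β]
    {g : (Fin N → ℝ) → β} (hg : Measurable g) {f : (Fin N → ℝ) → ℝ} (hf : Measurable f)
    {h : β → ℝ} (hh : Measurable h)
    (hfh : ∀ A, MeasurableSet A →
      ∑ e : Equiv.Perm (Fin N) with g (fun i => x (e i)) ∈ A, f (fun i => x (e i)) =
        ∑ e : Equiv.Perm (Fin N) with g (fun i => x (e i)) ∈ A, h (g fun i => x (e i))) :
    P[fun ω => f (fun i : Fin N => X i ω) |
        MeasurableSpace.comap (fun ω => g fun i : Fin N => X i ω) inferInstance]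
      =ᵐ[P] fun ω => h (g fun i : Fin N => X i ω) := by
  have hm := (hg.comp (measurable_sample hXm)).comap_le
  refine (ae_eq_condExp_of_forall_setIntegral_eq hm (hX.integrable_comp hXm hf)
    (fun _ _ _ => (hX.integrable_comp hXm (hh.comp hg)).integrableOn) ?_
    (hh.comp (comap_measurable _)).aestronglyMeasurable).symm
  rintro _ ⟨A, hA, rfl⟩ -
  exact (hX.setIntegral_comp hXm (hh.comp hg) (hg hA)).trans
    ((hfh A hA).symm ▸ (hX.setIntegral_comp hXm hf (hg hA)).symm)

end samplesWithoutReplacement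

theorem sum_fin_filter_val_lt {M : Type*} [AddCommMonoid M] {N m : ℕ} (hm : m ≤ N)
    (f : ℕ → M) : ∑ i ∈ {i : Fin N | ↑i < m}, f i = ∑ i ∈ range m, f i := by
  refine Finset.sum_bij' (fun i _ => i) (fun i hi => ⟨i, by grind⟩) ?_ ?_ ?_ ?_ ?_ <;> simp

theorem card_compl_filter_val_lt {N m : ℕ} (hm : m ≤ N) :
    (#({i : Fin N | ↑i < m} : Finset (Fin N))ᶜ : ℝ) = N - m := by
  rw [Finset.card_compl, Fintype.card_fin, Fin.card_filter_val_lt, min_eq_right hm, Nat.cast_sub hm]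

theorem filter_val_lt_succ {N m : ℕ} (hm : m < N) :
    ({i : Fin N | ↑i < m + 1} : Finset (Fin N)) =
      insert ⟨m, hm⟩ ({i : Fin N | ↑i < m} : Finset (Fin N)) := by
  ext i; simp [Fin.ext_iff]; omega

noncomputable def qstar (N : ℕ) (μ σ2 : ℝ) (m : ℕ) (v : Fin N → ℝ) : ℝ :=
  (∑ i ∈ {i : Fin N | ↑i < m}, ((v i - μ) ^ 2 - σ2)) / ((N : ℝ) - m)

theorem measurable_qstar (N : ℕ) (μ σ2 : ℝ) (m : ℕ) : Measurable (qstar N μ σ2 m) := by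
  unfold qstar; fun_prop

theorem qstar_congr {N : ℕ} {μ σ2 : ℝ} {m : ℕ} {v w : Fin N → ℝ}
    (h : ∀ i : Fin N, ↑i < m → v i = w i) : qstar N μ σ2 m v = qstar N μ σ2 m w := by
  unfold qstar
  congr 1
  exact Finset.sum_congr rfl fun i hi => by rw [h i (Finset.mem_filter.mp hi).2]

noncomputable def qstarHistory (N : ℕ) (μ σ2 : ℝ) (n : ℕ) (v : Fin N → ℝ) : Fin n → ℝ :=
  fun j => qstar N μ σ2 (j + 1) v

theorem measurable_qstarHistory (N : ℕ) (μ σ2 : ℝ) (n : ℕ) :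
    Measurable (qstarHistory N μ σ2 n) :=
  measurable_pi_lambda _ fun _ => measurable_qstar ..

theorem qstarHistory_congr {N : ℕ} {μ σ2 : ℝ} {n : ℕ} {v w : Fin N → ℝ}
    (h : ∀ i : Fin N, ↑i < n → v i = w i) :
    qstarHistory N μ σ2 n v = qstarHistory N μ σ2 n w :=
  funext fun j => qstar_congr fun i hi => h i (by omega)

@[simp]
theorem qstarHistory_last (N : ℕ) (μ σ2 : ℝ) (n : ℕ) (v : Fin N → ℝ) :
    qstarHistory N μ σ2 (n + 1) v (Fin.last n) = qstar N μ σ2 (n + 1) v := by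
  simp [qstarHistory]

theorem sum_qstar_succ_perm {N : ℕ} {x : Fin N → ℝ} {μ σ2 : ℝ}
    (hσ2 : σ2 = (∑ i, (x i - μ) ^ 2) / N) {m : ℕ} (hm : m + 1 < N)
    {T : Finset (Equiv.Perm (Fin N))}
    (hT : ∀ e e', (∀ i : Fin N, ↑i < m → e i = e' i) → e ∈ T → e' ∈ T) :
    ∑ e ∈ T, qstar N μ σ2 (m + 1) (fun i => x (e i)) =
      ∑ e ∈ T, qstar N μ σ2 m (fun i => x (e i)) := by
  have hY : ∑ i, ((x i - μ) ^ 2 - σ2) = 0 := by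
    rw [Finset.sum_sub_distrib, Finset.sum_const, Finset.card_univ, Fintype.card_fin,
      nsmul_eq_mul, hσ2, mul_div_cancel₀ _ (Nat.cast_ne_zero.mpr (by omega)), sub_self]
  have hmN : m < N := by omega
  have key := sum_perm_sum_insert_div_card_compl (s := {i : Fin N | ↑i < m}) (p := ⟨m, hmN⟩)
    (fun e e' h => hT e e' fun i hi => h i (by simpa using hi)) hY (by simp)
    ⟨⟨m + 1, hm⟩, by simp [Fin.ext_iff]⟩
  simp only [qstar]
  rw [← card_compl_filter_val_lt hm.le, ← card_compl_filter_val_lt hmN.le,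
    filter_val_lt_succ hmN]
  exact key

theorem Qstar_martingale_general
    {Ω : Type*} [MeasurableSpace Ω] (P : Measure Ω) [IsProbabilityMeasure P]
    (N : ℕ) (x : Fin N → ℝ)
    (X : ℕ → Ω → ℝ) (hXm : ∀ i, Measurable (X i))
    (hX : samplesWithoutReplacement P N x X)
    (μ : ℝ)
    (σ2 : ℝ) (hσ2 : σ2 = (∑ i, (x i - μ) ^ 2) / N)
    (Qs : ℕ → Ω → ℝ)
    (hQs : ∀ k ω, Qs k ω = (∑ i ∈ Finset.range k, ((X i ω - μ) ^ 2 - σ2)) / ((N : ℝ) - k))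
    (k : ℕ) (hk1 : 3 ≤ k) (hk : k ≤ N) :
    MeasureTheory.condExp
        (MeasurableSpace.comap (fun ω (j : Fin (k - 2)) => Qs (j + 1) ω) inferInstance)
        P (fun ω => -Qs (k - 1) ω)
      =ᵐ[P] fun ω => -Qs (k - 2) ω := by
  classical
  have hQ : ∀ m ≤ N, ∀ ω, Qs m ω = qstar N μ σ2 m fun i : Fin N => X i ω := fun m hm ω => by
    rw [hQs, qstar, sum_fin_filter_val_lt hm fun i => (X i ω - μ) ^ 2 - σ2]
  obtain ⟨n, hn⟩ : ∃ n, k - 2 = n + 1 := ⟨k - 3, by omega⟩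
  rw [show k - 1 = n + 2 by omega, hn]
  have hpast : (fun ω (j : Fin (n + 1)) => Qs (j + 1) ω) =
      fun ω => qstarHistory N μ σ2 (n + 1) fun i : Fin N => X i ω :=
    funext fun ω => funext fun j => hQ _ (by omega) ω
  have hnext : (fun ω => -Qs (n + 2) ω) = fun ω => -qstar N μ σ2 (n + 2) fun i : Fin N => X i ω :=
    funext fun ω => by rw [hQ _ (by omega)]
  rw [hpast, hnext]
  refine (hX.condExp_comp_ae_eq hXm (measurable_qstarHistory ..) (measurable_qstar ..).neg
    (h := fun y => -y (Fin.last n)) (by fun_prop) fun A _ => ?_).trans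
    (.of_forall fun ω => by simp [hQ (n + 1) (by omega)])
  simp only [Pi.neg_apply, Finset.sum_neg_distrib, qstarHistory_last, neg_inj]
  exact sum_qstar_succ_perm hσ2 (by omega) fun e e' h he => by
    simpa only [Finset.mem_filter, Finset.mem_univ, true_and,
      qstarHistory_congr fun i hi => congrArg x (h i hi)] using he

/-- The process `-Q*_k`, where `Q*_k = (∑_{i=1}^k ((X_i - μ)² - σ²))/(N - k)`, is a
martingale: `E[-Q*_{k-1} | Q*_1, …, Q*_{k-2}] = -Q*_{k-2}`. -/
theorem Qstar_martingale
    {Ω : Type*} [MeasurableSpace Ω] (P : Measure Ω) [IsProbabilityMeasure P]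
    (N : ℕ) (hN : 2 ≤ N) (x : Fin N → ℝ)
    (X : ℕ → Ω → ℝ) (hXm : ∀ i, Measurable (X i))
    (hX : samplesWithoutReplacement P N x X)
    (μ : ℝ) (hμ : μ = (∑ i, x i) / N)
    (σ2 : ℝ) (hσ2 : σ2 = (∑ i, (x i - μ) ^ 2) / N)
    (Qs : ℕ → Ω → ℝ)
    (hQs : ∀ k ω, Qs k ω = (∑ i ∈ Finset.range k, ((X i ω - μ) ^ 2 - σ2)) / ((N : ℝ) - k))
    (k : ℕ) (hk1 : 3 ≤ k) (hk : k ≤ N) :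
    MeasureTheory.condExp
        (MeasurableSpace.comap (fun ω (j : Fin (k - 2)) => Qs (j + 1) ω) inferInstance)
        P (fun ω => -Qs (k - 1) ω)
      =ᵐ[P] fun ω => -Qs (k - 2) ω :=
  Qstar_martingale_general P N x X hXm hX μ σ2 hσ2 Qs hQs k hk1 hk
end
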